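/- With the setup of the previous statement (i.i.d. centered charges with unit variance, independent of the walk), for all integers 0 ≤ a < b: E[(K_b − K_a)² | S] = ∑_{k=a+1}^{b} N_{k-1}(S_k), where N_m(x) = ∑_{i=1}^{m} 1_{S_i = x}. Consequently E[(K_b − K_a)² | S] ≤ √(I_b)·√(I_{a,b}), where I_b = ∑_x N_b(x)² and I_{a,b} = ∑_x (N_b(x) − N_a(x))². -/

import Mathlib

/-!
Given the walk, `K_b - K_a = ∑ q_i q_k 1{S_i = S_k}` over the pairs `i < k` with `a < k ≤ b`.
The charge products `q_i q_k` (`i < k`) are orthonormal in `L²` and independent of the walk,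
while the indicators are functions of the walk, so the conditional second moment is the sum of
the squared indicators, i.e. the number `∑_k N_{k-1}(S_k)` of such coincidences.
Bounding `N_{k-1} ≤ N_b` and grouping the times `k` by the site `S_k` gives
`∑_x N_b(x) (N_b(x) - N_a(x))`, and Cauchy–Schwarz concludes.
-/

open MeasureTheory ProbabilityTheory Finset

section CondExp

variable {Ω ι : Type*} {m₁ m₂ mΩ : MeasurableSpace Ω} {μ : Measure Ω} [IsFiniteMeasure μ]

theorem condExp_mul_ae_eq_integral_mul_of_indep (hle₁ : m₁ ≤ mΩ) (hle₂ : m₂ ≤ mΩ)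
    (hindep : Indep m₁ m₂ μ) {f g : Ω → ℝ} (hf : StronglyMeasurable[m₁] f)
    (hfint : Integrable f μ) (hg : StronglyMeasurable[m₂] g) {C : ℝ} (hgC : ∀ ω, |g ω| ≤ C) :
    μ[fun ω => f ω * g ω | m₂] =ᵐ[μ] fun ω => μ[f] * g ω := by
  have hfg : Integrable (f * g) μ :=
    hfint.mul_bdd (hg.mono hle₂).aestronglyMeasurable (.of_forall hgC)
  filter_upwards [condExp_mul_of_stronglyMeasurable_right hg hfg hfint,
    condExp_indep_eq hle₁ hle₂ hf hindep] with ω hmul hconst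
  rw [← hconst]
  exact hmul

theorem condExp_sq_sum_mul_ae_eq_of_orthonormal [DecidableEq ι] (hle₁ : m₁ ≤ mΩ) (hle₂ : m₂ ≤ mΩ)
    (hindep : Indep m₁ m₂ μ) (s : Finset ι) {X Y : ι → Ω → ℝ}
    (hX : ∀ i, StronglyMeasurable[m₁] (X i))
    (hXint : ∀ i ∈ s, ∀ j ∈ s, Integrable (fun ω => X i ω * X j ω) μ)
    (horth : ∀ i ∈ s, ∀ j ∈ s, ∫ ω, X i ω * X j ω ∂μ = if i = j then 1 else 0)
    (hY : ∀ i, StronglyMeasurable[m₂] (Y i)) {C : ℝ} (hYC : ∀ i ω, |Y i ω| ≤ C) :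
    μ[fun ω => (∑ i ∈ s, X i ω * Y i ω) ^ 2 | m₂] =ᵐ[μ] fun ω => ∑ i ∈ s, Y i ω ^ 2 := by
  set F : ι → ι → Ω → ℝ := fun i j ω => X i ω * X j ω * (Y i ω * Y j ω)
  have hsq : (fun ω => (∑ i ∈ s, X i ω * Y i ω) ^ 2) = ∑ i ∈ s, ∑ j ∈ s, F i j := by
    ext ω
    simp only [F, sq, sum_mul_sum, Finset.sum_apply]
    exact sum_congr rfl fun i _ => sum_congr rfl fun j _ => by ring
  have hYY : ∀ i j ω, |Y i ω * Y j ω| ≤ C * C := fun i j ω => by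
    rw [abs_mul]
    exact mul_le_mul (hYC i ω) (hYC j ω) (abs_nonneg _) ((abs_nonneg _).trans (hYC i ω))
  have hFint : ∀ i ∈ s, ∀ j ∈ s, Integrable (F i j) μ := fun i hi j hj =>
    (hXint i hi j hj).mul_bdd (((hY i).mul (hY j)).mono hle₂).aestronglyMeasurable
      (.of_forall (hYY i j))
  have hterm : ∀ i ∈ s, ∀ j ∈ s, μ[F i j | m₂] =ᵐ[μ]
      fun ω => (if i = j then 1 else 0) * (Y i ω * Y j ω) := fun i hi j hj => by
    rw [← horth i hi j hj]
    exact condExp_mul_ae_eq_integral_mul_of_indep hle₁ hle₂ hindep ((hX i).mul (hX j))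
      (hXint i hi j hj) ((hY i).mul (hY j)) (hYY i j)
  rw [hsq]
  refine (condExp_finsetSum (fun i hi => integrable_finsetSum' _ (hFint i hi)) _).trans ?_
  have hrow : ∀ i ∈ s, μ[∑ j ∈ s, F i j | m₂] =ᵐ[μ] fun ω => Y i ω ^ 2 := fun i hi => by
    refine (condExp_finsetSum (hFint i hi) _).trans ?_
    filter_upwards [(Filter.eventually_all_finset s).2 (hterm i hi)] with ω hω
    rw [Finset.sum_apply, sum_congr rfl hω]
    simp [sq, hi]
  filter_upwards [(Filter.eventually_all_finset s).2 hrow] with ω hω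
  rw [Finset.sum_apply, sum_congr rfl hω]

end CondExp

section Moments

variable {Ω ι : Type*} {mΩ : MeasurableSpace Ω} {μ : Measure Ω} [IsProbabilityMeasure μ]
  {f : ι → Ω → ℝ}

theorem integrable_pow_of_le_two {X : Ω → ℝ} (hX : AEStronglyMeasurable X μ)
    (hX2 : Integrable (fun ω => X ω ^ 2) μ) {n : ℕ} (hn : n ≤ 2) :
    Integrable (fun ω => X ω ^ n) μ := by
  interval_cases n
  · simp
  · simpa using ((memLp_two_iff_integrable_sq hX).2 hX2).integrable one_le_two
  · exact hX2

theorem ProbabilityTheory.iIndepFun.integrable_finsetProd (hf : iIndepFun f μ)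
    (hmeas : ∀ i, Measurable (f i))
    (hint : ∀ i, Integrable (f i) μ) (s : Finset ι) :
    Integrable (fun ω => ∏ i ∈ s, f i ω) μ := by
  classical
  induction s using Finset.induction with
  | empty => simp
  | insert i s hi ih =>
    simp_rw [prod_insert hi, ← Finset.prod_apply]
    exact (hf.indepFun_finsetProd_of_notMem hmeas hi).symm.integrable_mul (hint i)
      (by simpa [Finset.prod_fn] using ih)

theorem ProbabilityTheory.iIndepFun.integral_finsetProd (hf : iIndepFun f μ)
    (hmeas : ∀ i, Measurable (f i))
    (hint : ∀ i, Integrable (f i) μ) (s : Finset ι) :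
    ∫ ω, ∏ i ∈ s, f i ω ∂μ = ∏ i ∈ s, ∫ ω, f i ω ∂μ := by
  classical
  induction s using Finset.induction with
  | empty => simp
  | insert i s hi ih =>
    simp_rw [prod_insert hi, ← ih]
    have := (hf.indepFun_finsetProd_of_notMem hmeas hi).symm
    simp only [Finset.prod_fn] at this
    exact this.integral_fun_mul_eq_mul_integral (hint i).1
      (hf.integrable_finsetProd hmeas hint s).1

/-- Writing the product as `∏ t, q t ^ (multiplicity of t)`: an index of multiplicity one
kills the integral since the charges are centred, and if `p = p'` every multiplicity is two. -/
theorem integrable_and_integral_pair_mul_pair [LinearOrder ι] {q : ι → Ω → ℝ} (hq : iIndepFun q μ)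
    (hmeas : ∀ i, Measurable (q i)) (hcent : ∀ i, ∫ ω, q i ω ∂μ = 0)
    (hvar : ∀ i, ∫ ω, q i ω ^ 2 ∂μ = 1) (hint : ∀ i, Integrable (fun ω => q i ω ^ 2) μ)
    {p p' : ι × ι} (hp : p.1 < p.2) (hp' : p'.1 < p'.2) :
    Integrable (fun ω => q p.1 ω * q p.2 ω * (q p'.1 ω * q p'.2 ω)) μ ∧
      ∫ ω, q p.1 ω * q p.2 ω * (q p'.1 ω * q p'.2 ω) ∂μ = if p = p' then 1 else 0 := by
  obtain ⟨i, j⟩ := p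
  obtain ⟨k, l⟩ := p'
  set m : Multiset ι := {i, j, k, l}
  have hprod : ∀ ω, q i ω * q j ω * (q k ω * q l ω) = ∏ t ∈ m.toFinset, q t ω ^ m.count t :=
    fun ω => by rw [← Finset.prod_multiset_map_count]; simp [m, mul_assoc]
  have hcount : ∀ t, m.count t = (if t = i then 1 else 0) + (if t = j then 1 else 0)
      + (if t = k then 1 else 0) + (if t = l then 1 else 0) := fun t => by
    simp only [m, Multiset.insert_eq_cons, Multiset.count_cons, Multiset.count_singleton]
    grind
  have hcount_le : ∀ t, m.count t ≤ 2 := fun t => by grind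
  have hpow : iIndepFun (fun t ω => q t ω ^ m.count t) μ :=
    hq.comp (fun t x => x ^ m.count t) fun t => measurable_id.pow_const _
  have hpow_meas : ∀ t, Measurable fun ω => q t ω ^ m.count t :=
    fun t => (hmeas t).pow_const _
  have hpow_int : ∀ t, Integrable (fun ω => q t ω ^ m.count t) μ :=
    fun t => integrable_pow_of_le_two (hmeas t).aestronglyMeasurable (hint t) (hcount_le t)
  simp only [hprod]
  refine ⟨hpow.integrable_finsetProd hpow_meas hpow_int _, ?_⟩
  rw [hpow.integral_finsetProd hpow_meas hpow_int]
  split_ifs with hpp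
  · obtain ⟨rfl, rfl⟩ := Prod.mk.inj hpp
    refine prod_eq_one fun t ht => ?_
    have htm : t = i ∨ t = j := by simpa [m] using ht
    have : m.count t = 2 := by grind
    rw [this, hvar]
  · have hsingle : ∃ t, m.count t = 1 := by
      by_cases hi : i = k ∨ i = l
      · exact ⟨j, by grind⟩
      · exact ⟨i, by grind⟩
    obtain ⟨t, ht⟩ := hsingle
    refine prod_eq_zero (Multiset.mem_toFinset.2 (Multiset.count_pos.1 (ht ▸ one_pos))) ?_
    simp only [ht, pow_one, hcent]

end Moments

def orderedPairs (n : ℕ) : Finset (ℕ × ℕ) :=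
  (Icc 1 n ×ˢ Icc 1 n).filter fun p => p.1 < p.2

theorem orderedPairs_mono {a b : ℕ} (hab : a ≤ b) : orderedPairs a ⊆ orderedPairs b := by
  intro p
  simp only [orderedPairs, mem_filter, mem_product, mem_Icc]
  omega

theorem lt_of_mem_orderedPairs {n : ℕ} {p : ℕ × ℕ} (hp : p ∈ orderedPairs n) : p.1 < p.2 :=
  (mem_filter.1 hp).2

section Visits

variable {α : Type*} [DecidableEq α] (s : ℕ → α)

def visitCount (m : ℕ) (x : α) : ℝ :=
  ∑ i ∈ Icc 1 m, if s i = x then 1 else 0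

theorem visitCount_mono {m n : ℕ} (hmn : m ≤ n) (x : α) : visitCount s m x ≤ visitCount s n x :=
  sum_le_sum_of_subset_of_nonneg (Icc_subset_Icc_right hmn) fun _ _ _ => by positivity

theorem visitCount_sub {a b : ℕ} (hab : a ≤ b) (x : α) :
    visitCount s b x - visitCount s a x = ∑ i ∈ Icc (a + 1) b, if s i = x then 1 else 0 := by
  have hsplit : Icc 1 b = Icc 1 a ∪ Icc (a + 1) b := by
    ext i; simp only [mem_union, mem_Icc]; omega
  have hdisj : Disjoint (Icc 1 a) (Icc (a + 1) b) :=
    disjoint_left.2 fun i hi hi' => by simp only [mem_Icc] at hi hi'; omega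
  rw [visitCount, visitCount, hsplit, sum_union hdisj, add_sub_cancel_left]

theorem visitCount_eq_zero_of_notMem {n : ℕ} {x : α} (hx : x ∉ (Icc 1 n).image s) :
    visitCount s n x = 0 :=
  sum_eq_zero fun i hi => if_neg fun h => hx (mem_image.2 ⟨i, hi, h⟩)

theorem sum_visitCount_pred_eq (a b : ℕ) :
    ∑ k ∈ Icc (a + 1) b, visitCount s (k - 1) (s k)
      = ∑ p ∈ orderedPairs b \ orderedPairs a, if s p.1 = s p.2 then 1 else 0 := by
  simp_rw [visitCount, sum_sigma']
  refine sum_nbij' (fun x => (x.2, x.1)) (fun p => ⟨p.2, p.1⟩) ?_ ?_ (fun _ _ => rfl)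
    (fun _ _ => rfl) (fun _ _ => rfl)
  all_goals
    rintro ⟨_, _⟩
    simp only [mem_sigma, mem_sdiff, orderedPairs, mem_filter, mem_product, mem_Icc]
    omega

theorem sum_comp_eq_sum_mul_visitCount_sub {a b : ℕ} (hab : a ≤ b) (g : α → ℝ) :
    ∑ k ∈ Icc (a + 1) b, g (s k)
      = ∑ x ∈ (Icc 1 b).image s, g x * (visitCount s b x - visitCount s a x) := by
  simp_rw [visitCount_sub s hab, mul_sum, mul_ite, mul_one, mul_zero]
  rw [sum_comm]
  refine sum_congr rfl fun k hk => ?_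
  rw [sum_ite_eq, if_pos (mem_image.2 ⟨k, ?_, rfl⟩)]
  simp only [mem_Icc] at hk ⊢
  omega

theorem sum_visitCount_pred_le_sqrt_mul_sqrt {a b : ℕ} (hab : a ≤ b) :
    ∑ k ∈ Icc (a + 1) b, visitCount s (k - 1) (s k)
      ≤ √(∑' x, visitCount s b x ^ 2) * √(∑' x, (visitCount s b x - visitCount s a x) ^ 2) := by
  set F := (Icc 1 b).image s
  have hvanish : ∀ x ∉ F, visitCount s a x = 0 ∧ visitCount s b x = 0 := fun x hx =>
    ⟨visitCount_eq_zero_of_notMem s fun h => hx (image_subset_image (Icc_subset_Icc_right hab) h),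
      visitCount_eq_zero_of_notMem s hx⟩
  calc ∑ k ∈ Icc (a + 1) b, visitCount s (k - 1) (s k)
      ≤ ∑ k ∈ Icc (a + 1) b, visitCount s b (s k) :=
        sum_le_sum fun k hk => visitCount_mono s (by rw [mem_Icc] at hk; omega) _
    _ = ∑ x ∈ F, visitCount s b x * (visitCount s b x - visitCount s a x) :=
        sum_comp_eq_sum_mul_visitCount_sub s hab _
    _ ≤ √(∑ x ∈ F, visitCount s b x ^ 2)
          * √(∑ x ∈ F, (visitCount s b x - visitCount s a x) ^ 2) :=
        Real.sum_mul_le_sqrt_mul_sqrt _ _ _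
    _ = _ := by
        rw [tsum_eq_sum fun x hx => by simp [(hvanish x hx).2],
          tsum_eq_sum fun x hx => by simp [hvanish x hx]]

end Visits

section Measurability

variable {Ω ι : Type*}

theorem stronglyMeasurable_comap_apply_mul_apply (X : Ω → ι → ℝ) (i j : ι) :
    StronglyMeasurable[.comap X inferInstance] fun ω => X ω i * X ω j :=
  (Measurable.comp (g := fun x : ι → ℝ => x i * x j)
    ((measurable_pi_apply i).mul (measurable_pi_apply j)) (comap_measurable X)).stronglyMeasurable

theorem stronglyMeasurable_comap_ite_apply_eq {β : Type*} [MeasurableSpace β] [MeasurableEq β]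
    [DecidableEq β]
    (Y : Ω → ι → β) (i j : ι) :
    StronglyMeasurable[.comap Y inferInstance] fun ω => if Y ω i = Y ω j then (1 : ℝ) else 0 :=
  (Measurable.comp (g := fun y : ι → β => if y i = y j then (1 : ℝ) else 0)
    (.ite (measurableSet_eq_fun (measurable_pi_apply i) (measurable_pi_apply j))
      measurable_const measurable_const) (comap_measurable Y)).stronglyMeasurable

end Measurability

theorem charged_polymer_conditional_variance_general
    {Ω : Type*} {m0 : MeasurableSpace Ω} (μ : Measure Ω) [IsProbabilityMeasure μ]
    (d : ℕ) (q : ℕ → Ω → ℝ) (S : ℕ → Ω → (Fin d → ℤ))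
    (hqmeas : ∀ i, Measurable (q i))
    (hqindep : iIndepFun q μ)
    (hqcent : ∀ i, ∫ ω, q i ω ∂μ = 0)
    (hqvar : ∀ i, ∫ ω, (q i ω) ^ 2 ∂μ = 1)
    (hqint : ∀ i, Integrable (fun ω => (q i ω) ^ 2) μ)
    (hqS : IndepFun (fun ω => fun i : ℕ => q i ω) (fun ω => fun n : ℕ => S n ω) μ)
    (K : ℕ → Ω → ℝ)
    (hK : ∀ n ω, K n ω = ∑ p ∈ (Finset.Icc 1 n ×ˢ Finset.Icc 1 n).filter
        (fun p => p.1 < p.2),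
        q p.1 ω * q p.2 ω * (if S p.1 ω = S p.2 ω then 1 else 0))
    (N : ℕ → (Fin d → ℤ) → Ω → ℝ)
    (hN : ∀ m x ω, N m x ω = ∑ i ∈ Finset.Icc 1 m, if S i ω = x then (1:ℝ) else 0)
    (mS : MeasurableSpace Ω)
    (hmS : mS = MeasurableSpace.comap (fun ω => fun n : ℕ => S n ω) inferInstance)
    (hmSle : mS ≤ m0)
    (a b : ℕ) (hab : a < b) :
    (μ[(fun ω => (K b ω - K a ω) ^ 2)|mS]
      =ᵐ[μ] fun ω => ∑ k ∈ Finset.Icc (a+1) b, N (k-1) (S k ω) ω)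
    ∧ (∀ᵐ ω ∂μ, (μ[(fun ω' => (K b ω' - K a ω') ^ 2)|mS]) ω
        ≤ Real.sqrt (∑' x : Fin d → ℤ, (N b x ω) ^ 2)
          * Real.sqrt (∑' x : Fin d → ℤ, (N b x ω - N a x ω) ^ 2)) := by
  subst hmS
  have hNvisit : ∀ m x ω, N m x ω = visitCount (S · ω) m x := hN
  simp only [hNvisit]
  set D := orderedPairs b \ orderedPairs a
  set T : ℕ × ℕ → Ω → ℝ := fun p ω => if S p.1 ω = S p.2 ω then 1 else 0
  have hincr : ∀ ω, K b ω - K a ω = ∑ p ∈ D, q p.1 ω * q p.2 ω * T p ω := fun ω => by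
    rw [hK, hK]
    exact (sum_sdiff_eq_sub (orderedPairs_mono hab.le)).symm
  have hvisits : ∀ ω, ∑ k ∈ Icc (a + 1) b, visitCount (S · ω) (k - 1) (S k ω)
      = ∑ p ∈ D, T p ω ^ 2 := fun ω => by
    simp only [sum_visitCount_pred_eq, T, ite_pow, one_pow, zero_pow two_ne_zero]
    rfl
  have hmoments := fun p (hp : p ∈ D) p' (hp' : p' ∈ D) =>
    integrable_and_integral_pair_mul_pair hqindep hqmeas hqcent hqvar hqint
      (lt_of_mem_orderedPairs (mem_sdiff.1 hp).1) (lt_of_mem_orderedPairs (mem_sdiff.1 hp').1)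
  have hTbound : ∀ p ω, |T p ω| ≤ 1 := fun p ω => by simp only [T]; split_ifs <;> simp
  have hcond : μ[fun ω => (K b ω - K a ω) ^ 2 | .comap (fun ω n => S n ω) inferInstance]
      =ᵐ[μ] fun ω => ∑ k ∈ Icc (a + 1) b, visitCount (S · ω) (k - 1) (S k ω) := by
    simp_rw [hincr, hvisits]
    exact condExp_sq_sum_mul_ae_eq_of_orthonormal (measurable_pi_lambda _ hqmeas).comap_le
      hmSle ((IndepFun_iff_Indep _ _ _).1 hqS) D
      (fun p => stronglyMeasurable_comap_apply_mul_apply _ p.1 p.2)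
      (fun p hp p' hp' => (hmoments p hp p' hp').1) (fun p hp p' hp' => (hmoments p hp p' hp').2)
      (fun p => stronglyMeasurable_comap_ite_apply_eq _ p.1 p.2) hTbound
  refine ⟨hcond, ?_⟩
  filter_upwards [hcond] with ω hω
  rw [hω]
  exact sum_visitCount_pred_le_sqrt_mul_sqrt _ hab.le

/-- Conditional second moment of an increment of the charged-polymer Hamiltonian given the
walk: `E[(K_b - K_a)² | S] = ∑_{k=a+1}^b N_{k-1}(S_k)` a.s., and this is at most
`√I_b √I_{a,b}`. -/
theorem charged_polymer_conditional_variance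
    {Ω : Type*} {m0 : MeasurableSpace Ω} (μ : Measure Ω) [IsProbabilityMeasure μ]
    (d : ℕ) (q : ℕ → Ω → ℝ) (S : ℕ → Ω → (Fin d → ℤ))
    (hqmeas : ∀ i, Measurable (q i)) (hSmeas : ∀ n, Measurable (S n))
    (hqindep : iIndepFun q μ)
    (hqident : ∀ i, IdentDistrib (q i) (q 1) μ μ)
    (hqcent : ∀ i, ∫ ω, q i ω ∂μ = 0)
    (hqvar : ∀ i, ∫ ω, (q i ω) ^ 2 ∂μ = 1)
    (hqint : ∀ i, Integrable (fun ω => (q i ω) ^ 2) μ)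
    (hqS : IndepFun (fun ω => fun i : ℕ => q i ω) (fun ω => fun n : ℕ => S n ω) μ)
    (K : ℕ → Ω → ℝ)
    (hK : ∀ n ω, K n ω = ∑ p ∈ (Finset.Icc 1 n ×ˢ Finset.Icc 1 n).filter
        (fun p => p.1 < p.2),
        q p.1 ω * q p.2 ω * (if S p.1 ω = S p.2 ω then 1 else 0))
    (N : ℕ → (Fin d → ℤ) → Ω → ℝ)
    (hN : ∀ m x ω, N m x ω = ∑ i ∈ Finset.Icc 1 m, if S i ω = x then (1:ℝ) else 0)
    (mS : MeasurableSpace Ω)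
    (hmS : mS = MeasurableSpace.comap (fun ω => fun n : ℕ => S n ω) inferInstance)
    (hmSle : mS ≤ m0)
    (a b : ℕ) (hab : a < b) :
    (μ[(fun ω => (K b ω - K a ω) ^ 2)|mS]
      =ᵐ[μ] fun ω => ∑ k ∈ Finset.Icc (a+1) b, N (k-1) (S k ω) ω)
    ∧ (∀ᵐ ω ∂μ, (μ[(fun ω' => (K b ω' - K a ω') ^ 2)|mS]) ω
        ≤ Real.sqrt (∑' x : Fin d → ℤ, (N b x ω) ^ 2)
          * Real.sqrt (∑' x : Fin d → ℤ, (N b x ω - N a x ω) ^ 2)) :=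
  charged_polymer_conditional_variance_general μ d q S hqmeas hqindep hqcent hqvar hqint hqS K hK N
    hN mS hmS hmSle a b hab
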